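/- arXiv:1311.4432 — 3 statements merged into one kernel-verified Lean document; each statement's English description precedes it below -/
import Mathlib

section
/- Let n ∈ ℕ and let A be a symmetric real n×n matrix with A i j ≤ 0 whenever i ≠ j and with zero row sums, i.e. Σ_j A i j = 0 for every i. Let L ≥ 0 and let G : ℝ → ℝ be monotone nondecreasing and Lipschitz with constant L (|G(s) − G(t)| ≤ L|s − t| for all s, t). Then for every vector x : Fin n → ℝ, writing g := (fun i => G (x i)), one has g ⬝ᵥ (A *ᵥ g) ≤ L * (x ⬝ᵥ (A *ᵥ g)). -/
open Matrix

/-! Symmetry and zero row sums give the edge form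
`v ⬝ᵥ A *ᵥ w = -½ ∑ᵢⱼ Aᵢⱼ (vᵢ - vⱼ)(wᵢ - wⱼ)`. Off the diagonal `Aᵢⱼ ≤ 0`, and for `g = G ∘ x`
monotonicity and the Lipschitz bound give `(gᵢ - gⱼ)² ≤ L (xᵢ - xⱼ)(gᵢ - gⱼ)`, so the
inequality holds edge by edge. -/

theorem Matrix.IsSymm.sum_apply_left_eq_zero {ι R : Type*} [Fintype ι] [AddCommMonoid R]
    {A : Matrix ι ι R} (hA : A.IsSymm) (hrow : ∀ i, ∑ j, A i j = 0) (j : ι) :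
    ∑ i, A i j = 0 := by
  simpa only [hA.apply] using hrow j

theorem Matrix.IsSymm.two_mul_dotProduct_mulVec_eq_neg_sum {ι R : Type*} [Fintype ι]
    [CommRing R] {A : Matrix ι ι R} (hA : A.IsSymm) (hrow : ∀ i, ∑ j, A i j = 0)
    (v w : ι → R) :
    2 * (v ⬝ᵥ (A *ᵥ w)) = -∑ i, ∑ j, A i j * (v i - v j) * (w i - w j) := by
  have hdiag : ∑ i, ∑ j, A i j * (v i * w i) = 0 := by
    simp only [← Finset.sum_mul, hrow, zero_mul, Finset.sum_const_zero]
  have hdiag' : ∑ i, ∑ j, A i j * (v j * w j) = 0 := by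
    rw [Finset.sum_comm]
    simp only [← Finset.sum_mul, hA.sum_apply_left_eq_zero hrow, zero_mul,
      Finset.sum_const_zero]
  have hcross : ∑ i, ∑ j, A i j * (v j * w i) = v ⬝ᵥ (A *ᵥ w) := by
    rw [Finset.sum_comm]
    simp only [dotProduct, mulVec, Finset.mul_sum, hA.apply]
    exact Finset.sum_congr rfl fun _ _ => Finset.sum_congr rfl fun _ _ => by ring
  have hcross' : ∑ i, ∑ j, A i j * (v i * w j) = v ⬝ᵥ (A *ᵥ w) := by
    simp only [dotProduct, mulVec, Finset.mul_sum]
    exact Finset.sum_congr rfl fun _ _ => Finset.sum_congr rfl fun _ _ => by ring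
  have hexpand : ∑ i, ∑ j, A i j * (v i - v j) * (w i - w j) =
      ∑ i, ∑ j, (A i j * (v i * w i) - A i j * (v i * w j) - A i j * (v j * w i)
        + A i j * (v j * w j)) :=
    Finset.sum_congr rfl fun _ _ => Finset.sum_congr rfl fun _ _ => by ring
  rw [hexpand]
  simp only [Finset.sum_add_distrib, Finset.sum_sub_distrib, hdiag, hdiag', hcross, hcross']
  ring

theorem Monotone.sq_sub_le_mul_mul_sub {G : ℝ → ℝ} (hG : Monotone G) {L : ℝ}
    (hlip : ∀ s t : ℝ, |G s - G t| ≤ L * |s - t|) (s t : ℝ) :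
    (G s - G t) ^ 2 ≤ L * ((s - t) * (G s - G t)) := by
  have hsign : 0 ≤ (s - t) * (G s - G t) := by
    rcases le_total s t with h | h
    · exact mul_nonneg_of_nonpos_of_nonpos (sub_nonpos.2 h) (sub_nonpos.2 (hG h))
    · exact mul_nonneg (sub_nonneg.2 h) (sub_nonneg.2 (hG h))
  calc (G s - G t) ^ 2 = |G s - G t| * |G s - G t| := by rw [← abs_mul, abs_mul_self, sq]
    _ ≤ L * |s - t| * |G s - G t| := by gcongr; exact hlip s t
    _ = L * ((s - t) * (G s - G t)) := by rw [mul_assoc, ← abs_mul, abs_of_nonneg hsign]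

theorem stiffness_monotone_lipschitz_inequality_general
    (n : ℕ) (A : Matrix (Fin n) (Fin n) ℝ) (hsymm : A.IsSymm)
    (hoff : ∀ i j, i ≠ j → A i j ≤ 0)
    (hrow : ∀ i, ∑ j, A i j = 0)
    (L : ℝ) (G : ℝ → ℝ) (hmono : Monotone G)
    (hlip : ∀ s t : ℝ, |G s - G t| ≤ L * |s - t|)
    (x : Fin n → ℝ) :
    (fun i => G (x i)) ⬝ᵥ (A *ᵥ fun i => G (x i)) ≤
      L * (x ⬝ᵥ (A *ᵥ fun i => G (x i))) := by
  set g : Fin n → ℝ := fun i => G (x i)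
  have hterm : ∀ i j,
      L * (A i j * (x i - x j) * (g i - g j)) ≤ A i j * (g i - g j) * (g i - g j) := by
    intro i j
    rcases eq_or_ne i j with rfl | hij
    · simp
    · have := mul_le_mul_of_nonpos_left
        (hmono.sq_sub_le_mul_mul_sub hlip (x i) (x j)) (hoff i j hij)
      linarith
  have hsum := Finset.sum_le_sum fun i (_ : i ∈ Finset.univ) =>
    Finset.sum_le_sum fun j (_ : j ∈ Finset.univ) => hterm i j
  have hg := hsymm.two_mul_dotProduct_mulVec_eq_neg_sum hrow g g
  have hx := hsymm.two_mul_dotProduct_mulVec_eq_neg_sum hrow x g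
  simp only [← Finset.mul_sum] at hsum
  linear_combination (hsum + hg - L * hx) / 2

/-- Matrix form of the stiffness inequality (3.23): if `A` is a symmetric stiffness-type
matrix (nonpositive off-diagonal entries, zero row sums) and `G` is monotone nondecreasing
and Lipschitz with constant `L ≥ 0`, then for every nodal vector `x`, with `g i = G (x i)`,
one has `g ⬝ᵥ (A *ᵥ g) ≤ L * (x ⬝ᵥ (A *ᵥ g))`. -/
theorem stiffness_monotone_lipschitz_inequality
    (n : ℕ) (A : Matrix (Fin n) (Fin n) ℝ) (hsymm : A.IsSymm)
    (hoff : ∀ i j, i ≠ j → A i j ≤ 0)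
    (hrow : ∀ i, ∑ j, A i j = 0)
    (L : ℝ) (hL : 0 ≤ L) (G : ℝ → ℝ) (hmono : Monotone G)
    (hlip : ∀ s t : ℝ, |G s - G t| ≤ L * |s - t|)
    (x : Fin n → ℝ) :
    (fun i => G (x i)) ⬝ᵥ (A *ᵥ fun i => G (x i)) ≤
      L * (x ⬝ᵥ (A *ᵥ fun i => G (x i))) :=
  stiffness_monotone_lipschitz_inequality_general n A hsymm hoff hrow L G hmono hlip x
end

section
/- Let n ∈ ℕ, let m : Fin n → ℝ satisfy m i > 0 for every i, let A be a symmetric real n×n matrix with A i j ≤ 0 for i ≠ j and zero row sums (Σ_j A i j = 0 for every i), and let c ≥ 0. Then for every b : Fin n → ℝ there exists a unique ψ : Fin n → ℝ such that m i * ψ i + c * (A *ᵥ ψ) i = b i for every i. Moreover, if b i ≥ 0 for every i, then ψ i ≥ 0 for every i. -/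
/-!
At an index where `ψ` is minimal, the zero row sums give `(A ψ)ᵢ = ∑ⱼ Aᵢⱼ (ψⱼ - ψᵢ) ≤ 0`, so the
equation forces `mᵢ ψᵢ ≥ bᵢ ≥ 0` there: this is the discrete maximum principle. Applied to the
difference of two solutions it makes `diagonal m + c • A` injective, hence invertible.
-/

open Matrix

variable {ι 𝕜 : Type*} [Fintype ι] {A : Matrix ι ι 𝕜} {m : ι → 𝕜} {c : 𝕜}

section Ring

variable [Ring 𝕜]

theorem Matrix.mulVec_apply_eq_sum_mul_sub (hrow : ∀ i, ∑ j, A i j = 0) (ψ : ι → 𝕜) (i : ι) :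
    (A *ᵥ ψ) i = ∑ j, A i j * (ψ j - ψ i) := by
  simp only [mul_sub, Finset.sum_sub_distrib, ← Finset.sum_mul, hrow, zero_mul, sub_zero]
  rfl

section OrderedRing

variable [LinearOrder 𝕜] [IsStrictOrderedRing 𝕜]

theorem Matrix.mulVec_apply_nonpos_of_forall_le (hoff : ∀ i j, i ≠ j → A i j ≤ 0)
    (hrow : ∀ i, ∑ j, A i j = 0) {ψ : ι → 𝕜} {i : ι} (hmin : ∀ j, ψ i ≤ ψ j) :
    (A *ᵥ ψ) i ≤ 0 := by
  rw [mulVec_apply_eq_sum_mul_sub hrow]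
  refine Finset.sum_nonpos fun j _ => ?_
  obtain rfl | hij := eq_or_ne i j
  · simp
  · exact mul_nonpos_of_nonpos_of_nonneg (hoff i j hij) (sub_nonneg.mpr (hmin j))

theorem nonneg_of_forall_mul_add_mul_mulVec_nonneg (hm : ∀ i, 0 < m i)
    (hoff : ∀ i j, i ≠ j → A i j ≤ 0) (hrow : ∀ i, ∑ j, A i j = 0) (hc : 0 ≤ c)
    {ψ : ι → 𝕜} (h : ∀ i, 0 ≤ m i * ψ i + c * (A *ᵥ ψ) i) : 0 ≤ ψ := by
  intro i
  have : Nonempty ι := ⟨i⟩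
  obtain ⟨i₀, hi₀⟩ := Finite.exists_min ψ
  have hAψ : c * (A *ᵥ ψ) i₀ ≤ 0 :=
    mul_nonpos_of_nonneg_of_nonpos hc (mulVec_apply_nonpos_of_forall_le hoff hrow hi₀)
  have hψ₀ : 0 ≤ ψ i₀ :=
    nonneg_of_mul_nonneg_right ((h i₀).trans (add_le_of_nonpos_right hAψ)) (hm i₀)
  exact hψ₀.trans (hi₀ i)

end OrderedRing

end Ring

theorem Matrix.diagonal_add_smul_mulVec_apply [CommSemiring 𝕜] [DecidableEq ι] (ψ : ι → 𝕜)
    (i : ι) : ((diagonal m + c • A) *ᵥ ψ) i = m i * ψ i + c * (A *ᵥ ψ) i := by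
  simp [add_mulVec, mulVec_diagonal, smul_mulVec]

section Field

variable [Field 𝕜] [LinearOrder 𝕜] [IsStrictOrderedRing 𝕜]

theorem Matrix.mulVec_diagonal_add_smul_injective [DecidableEq ι] (hm : ∀ i, 0 < m i)
    (hoff : ∀ i j, i ≠ j → A i j ≤ 0) (hrow : ∀ i, ∑ j, A i j = 0) (hc : 0 ≤ c) :
    Function.Injective (diagonal m + c • A).mulVec := by
  have hle : ∀ ψ φ, (diagonal m + c • A) *ᵥ ψ = (diagonal m + c • A) *ᵥ φ → ψ ≤ φ := by
    intro ψ φ h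
    refine sub_nonneg.mp (nonneg_of_forall_mul_add_mul_mulVec_nonneg hm hoff hrow hc fun i => ?_)
    rw [← diagonal_add_smul_mulVec_apply, mulVec_sub, h, sub_self]
    rfl
  exact fun ψ φ h => le_antisymm (hle ψ φ h) (hle φ ψ h.symm)

theorem Matrix.mulVec_diagonal_add_smul_bijective [DecidableEq ι] (hm : ∀ i, 0 < m i)
    (hoff : ∀ i j, i ≠ j → A i j ≤ 0) (hrow : ∀ i, ∑ j, A i j = 0) (hc : 0 ≤ c) :
    Function.Bijective (diagonal m + c • A).mulVec := by
  have hinj := mulVec_diagonal_add_smul_injective hm hoff hrow hc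
  exact ⟨hinj, mulVec_surjective_iff_isUnit.mpr (mulVec_injective_iff_isUnit.mp hinj)⟩

end Field

theorem surfactant_step_existence_uniqueness_nonneg_general
    (n : ℕ) (m : Fin n → ℝ) (hm : ∀ i, 0 < m i)
    (A : Matrix (Fin n) (Fin n) ℝ)
    (hoff : ∀ i j, i ≠ j → A i j ≤ 0)
    (hrow : ∀ i, ∑ j, A i j = 0)
    (c : ℝ) (hc : 0 ≤ c) (b : Fin n → ℝ) :
    (∃! ψ : Fin n → ℝ, ∀ i, m i * ψ i + c * (A *ᵥ ψ) i = b i) ∧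
    ((∀ i, 0 ≤ b i) → ∀ ψ : Fin n → ℝ,
      (∀ i, m i * ψ i + c * (A *ᵥ ψ) i = b i) → ∀ i, 0 ≤ ψ i) := by
  have hsystem : ∀ ψ, (diagonal m + c • A) *ᵥ ψ = b ↔
      ∀ i, m i * ψ i + c * (A *ᵥ ψ) i = b i := fun ψ => by
    simp only [funext_iff, diagonal_add_smul_mulVec_apply]
  refine ⟨?_, fun hb ψ hψ => nonneg_of_forall_mul_add_mul_mulVec_nonneg hm hoff hrow hc
    fun i => (hψ i).symm ▸ hb i⟩
  simpa only [hsystem] using (mulVec_diagonal_add_smul_bijective hm hoff hrow hc).existsUnique b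

/-- Matrix form of the surfactant step of the fully discrete scheme: with positive lumped
masses `m`, a symmetric stiffness-type matrix `A` (nonpositive off-diagonal entries, zero
row sums) and `c ≥ 0`, the linear system `m i * ψ i + c * (A *ᵥ ψ) i = b i` has a unique
solution `ψ`, and if `b ≥ 0` then `ψ ≥ 0` (discrete maximum principle). -/
theorem surfactant_step_existence_uniqueness_nonneg
    (n : ℕ) (m : Fin n → ℝ) (hm : ∀ i, 0 < m i)
    (A : Matrix (Fin n) (Fin n) ℝ) (hsymm : A.IsSymm)
    (hoff : ∀ i j, i ≠ j → A i j ≤ 0)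
    (hrow : ∀ i, ∑ j, A i j = 0)
    (c : ℝ) (hc : 0 ≤ c) (b : Fin n → ℝ) :
    (∃! ψ : Fin n → ℝ, ∀ i, m i * ψ i + c * (A *ᵥ ψ) i = b i) ∧
    ((∀ i, 0 ≤ b i) → ∀ ψ : Fin n → ℝ,
      (∀ i, m i * ψ i + c * (A *ᵥ ψ) i = b i) → ∀ i, 0 ≤ ψ i) :=
  surfactant_step_existence_uniqueness_nonneg_general n m hm A hoff hrow c hc b
end

section
/- Let γ₀ > 0, β > 0 and let ε satisfy 0 < ε ≤ 1 and β·ε ≤ 1. Let F(r) := γ₀(1 + βr(log r − 1)) be the surface energy of the linear equation of state, so that F′(ε) = γ₀ β log ε and F″(ε) = γ₀ β/ε, and let F_ε(r) := F(ε) + F′(ε)(r − ε) + ½ F″(ε)(r − ε)² for r ≤ ε (the quadratic regularization). Then for every r ≤ 0 one has F_ε(r) ≥ (γ₀ β/(2ε)) · r². -/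
/-!
Writing `γ(ε) = F(ε) - εF′(ε)` for the surface tension at `ε`, the regularized energy is
`F_ε(r) - ½F″(ε) r² = γ(ε) + F′(ε) r + F″(ε) ε (ε/2 - r)`. For the linear equation of state
`F′(ε) = γ₀β log ε ≤ 0` when `ε ≤ 1`, `γ(ε) = γ₀(1 - βε) ≥ 0` when `βε ≤ 1`, and
`F″(ε) = γ₀β/ε > 0`, so for `r ≤ 0` every term on the right is nonnegative.
-/

open Real

theorem half_mul_sq_le_quadratic_extension {a b c ε r : ℝ} (hγ : 0 ≤ a - ε * b) (hb : b ≤ 0)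
    (hc : 0 ≤ c) (hε : 0 ≤ ε) (hr : r ≤ 0) :
    c / 2 * r ^ 2 ≤ a + b * (r - ε) + 1 / 2 * c * (r - ε) ^ 2 := by
  have hbr : 0 ≤ b * r := mul_nonneg_of_nonpos_of_nonpos hb hr
  have hcε : 0 ≤ c * ε * (ε / 2 - r) := by
    have : 0 ≤ ε / 2 - r := by linarith
    positivity
  nlinarith

noncomputable def linearEnergy (γ₀ β r : ℝ) : ℝ := γ₀ * (1 + β * r * (log r - 1))

section linearEnergy

variable {γ₀ β x : ℝ}

theorem hasDerivAt_linearEnergy (hx : x ≠ 0) :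
    HasDerivAt (linearEnergy γ₀ β) (γ₀ * β * log x) x := by
  have h := (((hasDerivAt_mul_log hx).sub (hasDerivAt_id' x)).const_mul (γ₀ * β)).const_add γ₀
  have hfun : linearEnergy γ₀ β = fun r => γ₀ + γ₀ * β * (r * log r - r) := by
    funext r
    rw [linearEnergy]
    ring
  rw [hfun]
  exact h.congr_deriv (by ring)

theorem deriv_linearEnergy (hx : x ≠ 0) : deriv (linearEnergy γ₀ β) x = γ₀ * β * log x :=
  (hasDerivAt_linearEnergy hx).deriv

theorem deriv_deriv_linearEnergy (hx : x ≠ 0) :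
    deriv (deriv (linearEnergy γ₀ β)) x = γ₀ * β / x := by
  have h : deriv (linearEnergy γ₀ β) =ᶠ[nhds x] fun y => γ₀ * β * log y := by
    filter_upwards [isOpen_ne.mem_nhds hx] with y hy using deriv_linearEnergy hy
  rw [h.deriv_eq, deriv_const_mul _ (differentiableAt_log hx), deriv_log, div_eq_mul_inv]

theorem linearEnergy_sub_mul_deriv (hx : x ≠ 0) :
    linearEnergy γ₀ β x - x * deriv (linearEnergy γ₀ β) x = γ₀ * (1 - β * x) := by
  rw [deriv_linearEnergy hx, linearEnergy]
  ring

end linearEnergy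

/-- Quadratic lower bound on the regularized surface energy of the linear equation of state
on the negative half-line: with `F(r) = γ₀(1 + βr(log r - 1))`, `0 < ε ≤ 1`, `βε ≤ 1`, and
`F_ε(r) = F(ε) + F′(ε)(r - ε) + ½F″(ε)(r - ε)²` for `r ≤ ε`, one has
`F_ε(r) ≥ (γ₀β/(2ε)) r²` for every `r ≤ 0`. -/
theorem regularized_linear_energy_lower_bound
    (γ₀ β ε : ℝ) (hγ₀ : 0 < γ₀) (hβ : 0 < β)
    (hε0 : 0 < ε) (hε1 : ε ≤ 1) (hβε : β * ε ≤ 1)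
    (F Fε : ℝ → ℝ)
    (hF : ∀ r, F r = γ₀ * (1 + β * r * (Real.log r - 1)))
    (hFε : ∀ r : ℝ, r ≤ ε → Fε r =
      F ε + deriv F ε * (r - ε) + (1 / 2) * deriv (deriv F) ε * (r - ε) ^ 2) :
    ∀ r : ℝ, r ≤ 0 → γ₀ * β / (2 * ε) * r ^ 2 ≤ Fε r := by
  intro r hr
  obtain rfl : F = linearEnergy γ₀ β := funext hF
  have hγ : 0 ≤ linearEnergy γ₀ β ε - ε * deriv (linearEnergy γ₀ β) ε := by
    rw [linearEnergy_sub_mul_deriv hε0.ne']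
    exact mul_nonneg hγ₀.le (by linarith)
  have hslope : deriv (linearEnergy γ₀ β) ε ≤ 0 := by
    rw [deriv_linearEnergy hε0.ne']
    exact mul_nonpos_of_nonneg_of_nonpos (by positivity) (log_nonpos hε0.le hε1)
  have hcurv : deriv (deriv (linearEnergy γ₀ β)) ε = γ₀ * β / ε :=
    deriv_deriv_linearEnergy hε0.ne'
  have hcurv_nonneg : 0 ≤ deriv (deriv (linearEnergy γ₀ β)) ε := by
    rw [hcurv]
    positivity
  have h := half_mul_sq_le_quadratic_extension hγ hslope hcurv_nonneg hε0.le hr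
  rw [hcurv, div_div, mul_comm ε 2] at h
  rwa [hFε r (hr.trans hε0.le), hcurv]
end
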